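/- arXiv:math/0511425 — 3 statements merged into one kernel-verified Lean document; each statement's English description precedes it below -/
import Mathlib

section
/- If μ(w) contains a subword u with period p such that |u|/p > 2, then w contains a subword v of length ⌈|u|/2⌉ with period p/2. (In particular p is even.) -/
/-!
Place `u` in `μ(w)` at offset `k`. Letter `j` of `μ(w)` is letter `j / 2` of `w`, complemented
when `j` is odd, so `u` changes letter after every position `i` with `i + k` even, and the letters
of `u` at even positions spell a factor of `w` (complemented when `k` is odd). If `p` were odd, the
shift by `p` would carry these changes to the positions with `i + k` odd as well, so `u` would
alternate on its first `p + 1` letters and `u(p) ≠ u(0)`. For `p = 2q`, the factor of `w` read off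
the even positions of `u` has period `q`.
-/

/-- The Thue-Morse morphism: μ(0)=01, μ(1)=10, with 0 = `false`, 1 = `true`. -/
def mu (w : List Bool) : List Bool := w.flatMap fun b => [b, !b]

/-- `u` has period `p`: u(i) = u(i+p) for all valid indices. -/
def HasPeriod (u : List Bool) (p : ℕ) : Prop :=
  ∀ i, i + p < u.length → u.getD i false = u.getD (i + p) false

lemma mu_cons (b : Bool) (w : List Bool) : mu (b :: w) = b :: (!b) :: mu w := rfl

lemma length_mu (w : List Bool) : (mu w).length = 2 * w.length := by
  simp [mu, List.length_flatMap, mul_comm]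

lemma getD_mu : ∀ {w : List Bool} {k : ℕ}, k < 2 * w.length →
    (mu w).getD k false = (w.getD (k / 2) false ^^ decide (k % 2 = 1))
  | b :: w, 0, _ => by simp [mu_cons]
  | b :: w, 1, _ => by simp [mu_cons]
  | b :: w, k + 2, hk => by
    rw [mu_cons, List.getD_cons_succ, List.getD_cons_succ, getD_mu (by simp at hk; omega),
      Nat.add_div_right k two_pos, Nat.add_mod_right, List.getD_cons_succ]

lemma List.exists_getD_eq_of_infix {α : Type*} {u l : List α} (h : u <:+: l) (d : α) :
    ∃ k, u.length + k ≤ l.length ∧ ∀ i < u.length, u.getD i d = l.getD (i + k) d := by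
  obtain ⟨k, hk, hget⟩ := List.infix_iff_getElem?.mp h
  refine ⟨k, hk, fun i hi => ?_⟩
  rw [List.getD_eq_getElem _ _ hi, List.getD_eq_getElem?_getD, hget i hi, Option.getD_some]

lemma List.getD_take_drop {α : Type*} (l : List α) (d : α) {a n i : ℕ} (h : i < n) :
    ((l.drop a).take n).getD i d = l.getD (a + i) d := by
  rw [List.getD_eq_getElem?_getD, List.getD_eq_getElem?_getD, List.getElem?_take_of_lt h,
    List.getElem?_drop]

lemma exists_getD_eq_of_infix_mu {u w : List Bool} (h : u <:+: mu w) :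
    ∃ k, u.length + k ≤ 2 * w.length ∧ ∀ i < u.length,
      u.getD i false = (w.getD ((i + k) / 2) false ^^ decide ((i + k) % 2 = 1)) := by
  obtain ⟨k, hk, hu⟩ := List.exists_getD_eq_of_infix h false
  rw [length_mu] at hk
  exact ⟨k, hk, fun i hi => (hu i hi).trans (getD_mu (by omega))⟩

lemma apply_eq_not_of_alternating {f : ℕ → Bool} {n : ℕ} (h : ∀ i < n, f (i + 1) = !f i)
    (hn : Odd n) : f n = !f 0 := by
  obtain ⟨m, rfl⟩ := hn
  induction m with
  | zero => exact h 0 one_pos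
  | succ m ih =>
    rw [h _ (by omega), show 2 * (m + 1) = 2 * m + 1 + 1 by ring, h _ (by omega),
      ih fun i hi => h i (by omega), Bool.not_not]

theorem HasPeriod.even_of_alternating {u : List Bool} {p k : ℕ} (hper : HasPeriod u p)
    (hlen : 2 * p < u.length)
    (halt : ∀ i, Even (i + k) → i + 1 < u.length → u.getD (i + 1) false = !u.getD i false) :
    Even p := by
  by_contra hodd
  rw [Nat.not_even_iff_odd] at hodd
  -- an odd period carries the alternation from the even to the odd positions
  have hstep : ∀ i, i + p + 1 < u.length → u.getD (i + 1) false = !u.getD i false := by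
    intro i hi
    rcases Nat.even_or_odd (i + k) with he | ho
    · exact halt i he (by omega)
    · have he : Even (i + p + k) := by rw [add_right_comm]; exact ho.add_odd hodd
      rw [hper (i + 1) (by omega), hper i (by omega), add_right_comm]
      exact halt (i + p) he (by omega)
  have hflip := apply_eq_not_of_alternating (f := fun i => u.getD i false)
    (fun i hi => hstep i (by omega)) hodd
  have hrep := hper 0 (by omega)
  simp only [zero_add] at hrep hflip
  exact Bool.not_ne_self _ (hrep.trans hflip).symm

theorem HasPeriod.of_getD_eq_two_mul {u v : List Bool} {q : ℕ} (c : Bool)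
    (hper : HasPeriod u (2 * q)) (hv : 2 * v.length ≤ u.length + 1)
    (hvu : ∀ i < v.length, v.getD i false = (u.getD (2 * i) false ^^ c)) : HasPeriod v q := by
  intro i hi
  rw [hvu i (by omega), hvu (i + q) hi, mul_add, hper (2 * i) (by omega)]

theorem stronger_general (w u : List Bool) (p : ℕ)
    (hsub : u <:+: mu w) (hper : HasPeriod u p) (hlen : 2 * p < u.length) :
    2 ∣ p ∧ ∃ v, v <:+: w ∧ v.length = (u.length + 1) / 2 ∧ HasPeriod v (p / 2) := by
  obtain ⟨k, hk, hu⟩ := exists_getD_eq_of_infix_mu hsub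
  have hp : Even p := hper.even_of_alternating (k := k) hlen fun i he hi => by
    obtain ⟨j, hj⟩ := he
    rw [hu i (by omega), hu (i + 1) hi, show (i + 1 + k) / 2 = (i + k) / 2 by omega,
      show (i + 1 + k) % 2 = 1 by omega, show (i + k) % 2 = 0 by omega]
    simp
  obtain ⟨q, rfl⟩ := hp.two_dvd
  set v := (w.drop (k / 2)).take ((u.length + 1) / 2)
  have hv : v.length = (u.length + 1) / 2 := by simp [v]; omega
  have hvw : v <:+: w := (List.take_prefix _ _).isInfix.trans (List.drop_suffix _ _).isInfix
  refine ⟨dvd_mul_right 2 q, v, hvw, hv, ?_⟩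
  rw [Nat.mul_div_cancel_left q two_pos]
  refine hper.of_getD_eq_two_mul (decide (k % 2 = 1)) (by omega) fun i hi => ?_
  rw [List.getD_take_drop _ _ (hv ▸ hi), hu _ (by omega),
    show (2 * i + k) / 2 = k / 2 + i by omega, Nat.mul_add_mod,
    Bool.xor_assoc, Bool.xor_self, Bool.xor_false]

theorem stronger (w u : List Bool) (p : ℕ) (hp : 1 ≤ p)
    (hsub : u <:+: mu w) (hper : HasPeriod u p) (hlen : 2 * p < u.length) :
    2 ∣ p ∧ ∃ v, v <:+: w ∧ v.length = (u.length + 1) / 2 ∧ HasPeriod v (p / 2) :=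
  stronger_general w u p hsub hper hlen
end

section
/- Let k ≥ 0 and let x = μ^k(z) where z ∈ {011011, 100100}. Then for every letter a ∈ {0,1}, the word xa contains an overlap (a 2⁺ power). -/
def ContainsOverlap (x : List Bool) : Prop :=
  ∃ u p, u <:+: x ∧ 1 ≤ p ∧ HasPeriod u p ∧ 2 * p < u.length

theorem ContainsOverlap.mono {x y : List Bool} (hxy : x <:+: y) (hx : ContainsOverlap x) :
    ContainsOverlap y := by
  obtain ⟨u, p, hu, hp⟩ := hx
  exact ⟨u, p, hu.trans hxy, hp⟩

theorem hasPeriod_append_self_append {w s : List Bool} (hs : s <+: w) :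
    HasPeriod (w ++ w ++ s) w.length := by
  obtain ⟨t, ht⟩ := (List.prefix_append_right_inj w).2 hs
  intro i hi
  have hi' : i < (w ++ s).length := by simp only [List.length_append] at hi ⊢; omega
  have hsw := hs.length_le
  calc (w ++ w ++ s).getD i false
      = (w ++ s ++ t).getD i false := by
        rw [ht, List.getD_append _ _ _ _ (by simp only [List.length_append] at hi' ⊢; omega)]
    _ = (w ++ s).getD i false := List.getD_append _ _ _ _ hi'
    _ = (w ++ (w ++ s)).getD (i + w.length) false := by
      rw [List.getD_append_right w (w ++ s) false _ (Nat.le_add_left _ _), Nat.add_sub_cancel]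
    _ = (w ++ w ++ s).getD (i + w.length) false := by rw [List.append_assoc]

theorem containsOverlap_append_self_append {w : List Bool} {c : Bool} (hc : [c] <+: w) :
    ContainsOverlap (w ++ w ++ [c]) :=
  ⟨_, w.length, List.infix_refl _, hc.length_le, hasPeriod_append_self_append hc, by simp; omega⟩

theorem mu_append (u v : List Bool) : mu (u ++ v) = mu u ++ mu v :=
  List.flatMap_append

theorem iterate_mu_append (k : ℕ) (u v : List Bool) :
    mu^[k] (u ++ v) = mu^[k] u ++ mu^[k] v := by
  induction k generalizing u v with
  | zero => rfl
  | succ k ih => simp only [Function.iterate_succ_apply, mu_append, ih]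

theorem singleton_prefix_iterate_mu {w : List Bool} {c : Bool} (k : ℕ) (hc : [c] <+: w) :
    [c] <+: mu^[k] w := by
  induction k generalizing w with
  | zero => exact hc
  | succ k ih =>
    obtain ⟨t, rfl⟩ := hc
    exact ih ⟨(!c) :: mu t, rfl⟩

theorem containsOverlap_iterate_mu_square_append {w : List Bool} {c : Bool} (k : ℕ)
    (hc : [c] <+: w) : ContainsOverlap (mu^[k] (w ++ w) ++ [c]) := by
  rw [iterate_mu_append]
  exact containsOverlap_append_self_append (singleton_prefix_iterate_mu k hc)

theorem containsOverlap_iterate_mu_append_pair_append (k : ℕ) (pre : List Bool) (c : Bool) :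
    ContainsOverlap (mu^[k] (pre ++ [c, c]) ++ [c]) := by
  refine (containsOverlap_iterate_mu_square_append k (List.prefix_refl [c])).mono ?_
  rw [show pre ++ [c, c] = pre ++ ([c] ++ [c]) from rfl]
  simp only [iterate_mu_append, List.append_assoc]
  exact (List.suffix_append _ _).isInfix

theorem extend_overlap (k : ℕ) (z : List Bool)
    (hz : z = [false, true, true, false, true, true] ∨
          z = [true, false, false, true, false, false]) (a : Bool) :
    ∃ u p, u <:+: (mu^[k] z ++ [a]) ∧ 1 ≤ p ∧ HasPeriod u p ∧ 2 * p < u.length := by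
  rcases hz with rfl | rfl <;> cases a
  · exact containsOverlap_iterate_mu_square_append (w := [false, true, true]) k ⟨_, rfl⟩
  · exact containsOverlap_iterate_mu_append_pair_append k [false, true, true, false] true
  · exact containsOverlap_iterate_mu_append_pair_append k [true, false, false, true] false
  · exact containsOverlap_iterate_mu_square_append (w := [true, false, false]) k ⟨_, rfl⟩
end

section
/- The infinite word a defined as the limit of A_0 = 00, A_{n+1} = 0·μ²(A_n) is 4-automatic; specifically, a = g(h^ω(0)) where h(0)=0134, h(1)=2134, h(2)=3234, h(3)=2321, h(4)=3421 and g(0)=g(1)=g(2)=0, g(3)=g(4)=1. Equivalently, for every n ≥ 0, A_n is the prefix of g(h^{n+1}(0)) of length (4^{n+1}+3·4^n−1)/3. -/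
/-- A₀ = 00, Aₙ₊₁ = 0·μ²(Aₙ). -/
def A : ℕ → List Bool
  | 0 => [false, false]
  | n + 1 => false :: mu (mu (A n))

/-- The morphism h on {0,1,2,3,4}: h(0)=0134, h(1)=2134, h(2)=3234, h(3)=2321, h(4)=3421. -/
def hm : Fin 5 → List (Fin 5) :=
  ![[0, 1, 3, 4], [2, 1, 3, 4], [3, 2, 3, 4], [2, 3, 2, 1], [3, 4, 2, 1]]

/-- The iterates hⁿ(0). -/
def hIter : ℕ → List (Fin 5)
  | 0 => [0]
  | n + 1 => (hIter n).flatMap hm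

/-- The coding g: g(0)=g(1)=g(2)=0, g(3)=g(4)=1. -/
def gc : Fin 5 → Bool := ![false, false, false, true, true]

/-! For every letter `c`, the tail of `g(h(c))` is `μ²(g(c))` without its last letter `g(c)`, and
that letter reappears as the first letter of `g(h(c'))` for the letter `c'` following `c` in `hⁿ(0)`
(an adjacency invariant preserved by `h`). Hence `g(h^{n+2}(0))` is `0 · μ²(g(h^{n+1}(0)))` with its
last letter dropped, and `A_{n+1} = 0 · μ²(A_n)` is a prefix of it by induction. -/

namespace List

variable {α β : Type*}

theorem IsChain.flatMap {R : α → α → Prop} {S : β → β → Prop} {f : α → List β}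
    (hne : ∀ a, f a ≠ []) (hS : ∀ a, (f a).IsChain S)
    (hR : ∀ a b, R a b → ∀ x ∈ (f a).getLast?, ∀ y ∈ (f b).head?, S x y)
    {l : List α} (hl : l.IsChain R) : (l.flatMap f).IsChain S := by
  rw [flatMap_def, isChain_flatten (by simpa using fun a _ => (hne a).symm), isChain_map]
  exact ⟨by simpa using fun a _ => hS a, hl.imp hR⟩

theorem tail_flatMap_eq_dropLast_flatMap {R : α → α → Prop} {f φ : α → List β}
    (hf : ∀ a, f a ≠ []) (hφ : ∀ a, φ a ≠ [])
    (htail : ∀ a, (f a).tail = (φ a).dropLast)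
    (hR : ∀ a b, R a b → (φ a).getLast? = (f b).head?) :
    ∀ {l : List α}, l.IsChain R → (l.flatMap f).tail = (l.flatMap φ).dropLast
  | [], _ => rfl
  | [a], _ => by simpa using htail a
  | a :: b :: l, h => by
    rw [isChain_cons_cons] at h
    obtain ⟨x, t, hx⟩ := exists_cons_of_ne_nil (hf b)
    obtain ⟨ys, hys⟩ : ∃ ys, φ a = ys ++ [x] := by
      rw [← getLast?_eq_some_iff, hR a b h.1, hx, head?_cons]
    have ih := tail_flatMap_eq_dropLast_flatMap hf hφ htail hR h.2
    have hΦ : (b :: l).flatMap φ ≠ [] := by simp [hφ b]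
    change (f a ++ (b :: l).flatMap f).tail = (φ a ++ (b :: l).flatMap φ).dropLast
    rw [tail_append_of_ne_nil (hf a), htail, dropLast_append_of_ne_nil hΦ, ← ih, flatMap_cons, hx,
      hys]
    simp

end List

theorem mu_mu (l : List Bool) : mu (mu l) = l.flatMap fun b => [b, !b, !b, b] := by
  simp [mu, List.flatMap_assoc]

theorem three_mul_length_A_add_one (n : ℕ) : 3 * (A n).length + 1 = 4 ^ (n + 1) + 3 * 4 ^ n := by
  induction n with
  | zero => rfl
  | succ n ih =>
    simp [A, mu_mu, List.length_flatMap, pow_succ] at *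
    omega

/-- Letters `c, c'` that may be adjacent in `hⁿ(0)`; the clause `c' ≠ 0` makes this relation
stable under `h`. -/
def Admissible (c c' : Fin 5) : Prop := c' ≠ 0 ∧ ((hm c').map gc).head? = some (gc c)

instance : DecidableRel Admissible := fun _ _ => by unfold Admissible; infer_instance

theorem hm_ne_nil (c : Fin 5) : hm c ≠ [] := by fin_cases c <;> simp [hm]

theorem isChain_hIter (n : ℕ) : (hIter n).IsChain Admissible := by
  induction n with
  | zero => exact List.isChain_singleton 0
  | succ n ih => exact ih.flatMap hm_ne_nil (by decide) (by decide)

theorem tail_map_gc_hIter_succ (n : ℕ) :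
    ((hIter (n + 1)).map gc).tail = (mu (mu ((hIter n).map gc))).dropLast := by
  rw [hIter, List.map_flatMap, mu_mu, List.flatMap_map]
  exact List.tail_flatMap_eq_dropLast_flatMap (by simp [hm_ne_nil]) (by simp) (by decide)
    (fun _ _ h => h.2.symm) (isChain_hIter n)

theorem hIter_head? (n : ℕ) : (hIter n).head? = some 0 := by
  induction n with
  | zero => rfl
  | succ n ih =>
    obtain ⟨t, ht⟩ := List.head?_eq_some_iff.1 ih
    rw [hIter, ht, List.flatMap_cons]
    rfl

theorem length_hIter (n : ℕ) : (hIter n).length = 4 ^ n := by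
  induction n with
  | zero => rfl
  | succ n ih =>
    have : ∀ c, (hm c).length = 4 := by decide
    simp [hIter, List.length_flatMap, this, ih, pow_succ]

theorem A_prefix_map_gc_hIter : ∀ n, A n <+: (hIter (n + 1)).map gc
  | 0 => by decide
  | n + 1 => by
    obtain ⟨s, hs⟩ := A_prefix_map_gc_hIter n
    have hs_ne : s ≠ [] := by
      rintro rfl
      have h := congrArg List.length hs
      have := three_mul_length_A_add_one n
      simp only [List.append_nil, List.length_map, length_hIter] at h
      rw [pow_succ] at *
      omega
    obtain ⟨t, ht⟩ : ∃ t, (hIter (n + 2)).map gc = false :: t := by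
      obtain ⟨t, ht⟩ := List.head?_eq_some_iff.1 (hIter_head? (n + 2))
      exact ⟨t.map gc, by rw [ht]; rfl⟩
    have key := tail_map_gc_hIter_succ (n + 1)
    rw [ht, List.tail_cons, ← hs, mu_mu, List.flatMap_append,
      List.dropLast_append_of_ne_nil (by cases s <;> simp_all), ← mu_mu, ← mu_mu] at key
    exact ⟨(mu (mu s)).dropLast, by rw [ht, key]; rfl⟩

theorem A_prefix_of_g_h (n : ℕ) :
    A n <+: (hIter (n + 1)).map gc ∧
    (A n).length = (4 ^ (n + 1) + 3 * 4 ^ n - 1) / 3 := by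
  refine ⟨A_prefix_map_gc_hIter n, ?_⟩
  have := three_mul_length_A_add_one n
  omega
end
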